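/- arXiv:2107.11331 — 8 statements merged into one kernel-verified Lean document; each statement's English description precedes it below -/
import Mathlib

section
/- If fail-prone systems F1 over P1 and F2 over P2 satisfy: (a) every set B in F3 restricted to P1 is a subset of some set in F1, and (b) every B in F3 restricted to P2 is a subset of some set in F2, and both F1 and F2 satisfy the Q3-condition, then F3 satisfies the Q3-condition over P3 = P1 ∪ P2 (i.e., no three sets in F3 cover P3). -/
/-- Downward closure `A*`: all subsets of members of `A`. -/
def downClosure {α : Type*} (A : Set (Set α)) : Set (Set α) := {S | ∃ B ∈ A, S ⊆ B}

/-- The Q3-condition: no three members of `F` cover `P`. -/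
def Q3cond {α : Type*} (P : Set α) (F : Set (Set α)) : Prop :=
  ∀ A ∈ F, ∀ B ∈ F, ∀ C ∈ F, ¬ P ⊆ A ∪ B ∪ C

/-- if every set in `F3` restricted to `P1` (resp. `P2`) lies in `F1*`
(resp. `F2*`) and both `F1`, `F2` satisfy the Q3-condition, then `F3` satisfies the
Q3-condition over `P1 ∪ P2`. -/
theorem stmt0 {α : Type*} (P1 P2 : Set α) (F1 F2 F3 : Set (Set α))
    (h1 : ∀ B ∈ F3, B ∩ P1 ∈ downClosure F1)
    (h2 : ∀ B ∈ F3, B ∩ P2 ∈ downClosure F2)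
    (hq1 : Q3cond P1 F1) (hq2 : Q3cond P2 F2) :
    Q3cond (P1 ∪ P2) F3 := by
  intro A hA B hB C hC hcov
  obtain ⟨A1, hA1, hAs⟩ := h1 A hA
  obtain ⟨B1, hB1, hBs⟩ := h1 B hB
  obtain ⟨C1, hC1, hCs⟩ := h1 C hC
  apply hq1 A1 hA1 B1 hB1 C1 hC1
  intro x hx
  have hx' : x ∈ A ∪ B ∪ C := hcov (Or.inl hx)
  rcases hx' with (h | h) | h
  · exact Or.inl (Or.inl (hAs ⟨h, hx⟩))
  · exact Or.inl (Or.inr (hBs ⟨h, hx⟩))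
  · exact Or.inr (hCs ⟨h, hx⟩)
end

section
/- Let P1 and P2 be disjoint finite sets, F1 a fail-prone system over P1 satisfying the Q3-condition, and F2 a fail-prone system over P2 satisfying the Q3-condition. Then the Cartesian composition F3 = { F ∪ F' : F ∈ F1, F' ∈ F2 } over P3 = P1 ∪ P2 satisfies the Q3-condition. -/
/-- Cartesian composition on disjoint sets preserves the Q3-condition. -/
theorem stmt2 {α : Type*} (P1 P2 : Set α) (F1 F2 : Set (Set α))
    (hdisj : Disjoint P1 P2)
    (hF1 : ∀ X ∈ F1, X ⊆ P1) (hF2 : ∀ X ∈ F2, X ⊆ P2)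
    (hq1 : Q3cond P1 F1) (hq2 : Q3cond P2 F2) :
    Q3cond (P1 ∪ P2) {S | ∃ X ∈ F1, ∃ Y ∈ F2, S = X ∪ Y} := by
  rintro A ⟨X1, hX1, Y1, hY1, rfl⟩ B ⟨X2, hX2, Y2, hY2, rfl⟩ C ⟨X3, hX3, Y3, hY3, rfl⟩ hsub
  apply hq1 X1 hX1 X2 hX2 X3 hX3
  intro p hp
  have := hsub (Set.mem_union_left _ hp)
  have hnot : ∀ Y ∈ F2, p ∉ Y := fun Y hY hpY =>
    Set.disjoint_left.mp hdisj hp (hF2 Y hY hpY)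
  rcases this with ((h | h) | (h | h)) | (h | h)
  · exact Or.inl (Or.inl h)
  · exact absurd h (hnot Y1 hY1)
  · exact Or.inl (Or.inr h)
  · exact absurd h (hnot Y2 hY2)
  · exact Or.inr h
  · exact absurd h (hnot Y3 hY3)
end

section
/- Let P1 and P2 be disjoint finite sets, Q1 a BQS for fail-prone system F1 over P1, and Q2 a BQS for F2 over P2. Then Q3 = { Q ∪ Q' : Q ∈ Q1, Q' ∈ Q2 } is a Byzantine quorum system for the Cartesian composition F3 = { F ∪ F' : F ∈ F1, F' ∈ F2 } over P1 ∪ P2. -/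
/-- Consistency of a Byzantine quorum system `Q` for fail-prone system `F`. -/
def Consistency {α : Type*} (Q F : Set (Set α)) : Prop :=
  ∀ A ∈ Q, ∀ B ∈ Q, ∀ X ∈ F, ¬ A ∩ B ⊆ X

/-- Availability of a Byzantine quorum system `Q` for fail-prone system `F`. -/
def Availability {α : Type*} (Q F : Set (Set α)) : Prop :=
  ∀ X ∈ F, ∃ A ∈ Q, X ∩ A = ∅

/-- for disjoint `P1`, `P2`, the pairwise unions of quorums form a
BQS for the Cartesian composition of the fail-prone systems. -/
theorem stmt3 {α : Type*} (P1 P2 : Set α) (Q1 Q2 F1 F2 : Set (Set α))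
    (hdisj : Disjoint P1 P2)
    (hF1 : ∀ X ∈ F1, X ⊆ P1) (hF2 : ∀ X ∈ F2, X ⊆ P2)
    (hQ1 : ∀ A ∈ Q1, A ⊆ P1) (hQ2 : ∀ A ∈ Q2, A ⊆ P2)
    (hcons1 : Consistency Q1 F1) (havail1 : Availability Q1 F1)
    (hcons2 : Consistency Q2 F2) (havail2 : Availability Q2 F2) :
    Consistency {S | ∃ A ∈ Q1, ∃ B ∈ Q2, S = A ∪ B}
        {S | ∃ X ∈ F1, ∃ Y ∈ F2, S = X ∪ Y} ∧
    Availability {S | ∃ A ∈ Q1, ∃ B ∈ Q2, S = A ∪ B}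
        {S | ∃ X ∈ F1, ∃ Y ∈ F2, S = X ∪ Y} := by
  constructor
  · rintro S ⟨A, hA, B, hB, rfl⟩ S' ⟨A', hA', B', hB', rfl⟩ T ⟨X, hX, Y, hY, rfl⟩ hsub
    apply hcons1 A hA A' hA' X hX
    intro p ⟨hpA, hpA'⟩
    have hp1 : p ∈ P1 := hQ1 A hA hpA
    have := hsub ⟨Or.inl hpA, Or.inl hpA'⟩
    rcases this with h | h
    · exact h
    · exact absurd hp1 (fun hp1 => hdisj.ne_of_mem hp1 (hF2 Y hY h) rfl)
  · rintro T ⟨X, hX, Y, hY, rfl⟩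
    obtain ⟨A, hA, hXA⟩ := havail1 X hX
    obtain ⟨B, hB, hYB⟩ := havail2 Y hY
    refine ⟨A ∪ B, ⟨A, hA, B, hB, rfl⟩, ?_⟩
    ext p
    simp only [Set.mem_inter_iff, Set.mem_union, Set.mem_empty_iff_false, iff_false]
    rintro ⟨hX' | hY', hA' | hB'⟩
    · exact Set.eq_empty_iff_forall_notMem.mp hXA p ⟨hX', hA'⟩
    · exact hdisj.ne_of_mem (hF1 X hX hX') (hQ2 B hB hB') rfl
    · exact hdisj.ne_of_mem (hQ1 A hA hA') (hF2 Y hY hY') rfl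
    · exact Set.eq_empty_iff_forall_notMem.mp hYB p ⟨hY', hB'⟩
end

section
/- Let F1 over P1 and F2 over P2 (possibly intersecting) be fail-prone systems, each satisfying the Q3-condition. Define F3 = F1 ⊗ F2 = { F ∪ F' : F ∈ F1*, F' ∈ F2*, and for every C ⊆ P1 ∩ P2, C ⊆ F if and only if C ⊆ F' }. Then F3 satisfies the Q3-condition over P3 = P1 ∪ P2. -/
/-- The `⊗` composition of two fail-prone systems over `P1` and `P2`. -/
def otimesComp {α : Type*} (P1 P2 : Set α) (A B : Set (Set α)) : Set (Set α) :=
  {S | ∃ a ∈ downClosure A, ∃ b ∈ downClosure B,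
      a ∩ (P1 ∩ P2) = b ∩ (P1 ∩ P2) ∧ S = a ∪ b}

/-- the `⊗` composition of two Q3 fail-prone systems over possibly
intersecting `P1`, `P2` satisfies the Q3-condition over `P1 ∪ P2`. -/
theorem stmt5 {α : Type*} (P1 P2 : Set α) (F1 F2 : Set (Set α))
    (hF1 : ∀ X ∈ F1, X ⊆ P1) (hF2 : ∀ X ∈ F2, X ⊆ P2)
    (hq1 : Q3cond P1 F1) (hq2 : Q3cond P2 F2) :
    Q3cond (P1 ∪ P2) (otimesComp P1 P2 F1 F2) := by
  rintro A ⟨a1, ⟨X1, hX1, ha1⟩, b1, ⟨Y1, hY1, hb1⟩, he1, rfl⟩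
         B ⟨a2, ⟨X2, hX2, ha2⟩, b2, ⟨Y2, hY2, hb2⟩, he2, rfl⟩
         C ⟨a3, ⟨X3, hX3, ha3⟩, b3, ⟨Y3, hY3, hb3⟩, he3, rfl⟩ hcov
  apply hq1 X1 hX1 X2 hX2 X3 hX3
  intro x hx
  have key : ∀ (a b Y : Set α), Y ∈ F2 → b ⊆ Y →
      a ∩ (P1 ∩ P2) = b ∩ (P1 ∩ P2) → x ∈ a ∪ b → x ∈ a := by
    intro a b Y hY hb he hx'
    rcases hx' with h | h
    · exact h
    · have hxI : x ∈ b ∩ (P1 ∩ P2) := ⟨h, hx, hF2 Y hY (hb h)⟩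
      rw [← he] at hxI
      exact hxI.1
  have := hcov (Set.mem_union_left _ hx)
  rcases this with (h | h) | h
  · exact Or.inl (Or.inl (ha1 (key a1 b1 Y1 hY1 hb1 he1 h)))
  · exact Or.inl (Or.inr (ha2 (key a2 b2 Y2 hY2 hb2 he2 h)))
  · exact Or.inr (ha3 (key a3 b3 Y3 hY3 hb3 he3 h))
end

section
/- If F3 = F1 ⊗ F2 satisfies: every B ∈ F3 has B ∩ P1 ∈ F1* and B ∩ P2 ∈ F2* (i.e., Construction of the ⊗ composition with possibly common processes), where F1 and F2 satisfy the Q3-condition and Q1, Q2 are BQS for F1 and F2 respectively, then Q3 = { Q ∪ Q' : Q ∈ Q1, Q' ∈ Q2 } satisfies the consistency property of a BQS for F3: for all Q_A, Q_B ∈ Q3 and all F ∈ F3, Q_A ∩ Q_B ⊄ F. -/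
/-- if every `B ∈ F3` satisfies `B ∩ P1 ∈ F1*` and `B ∩ P2 ∈ F2*`,
`F1`, `F2` satisfy Q3, and `Q1`, `Q2` are BQS for `F1`, `F2`, then the pairwise
unions of quorums satisfy consistency for `F3`. -/
theorem stmt6 {α : Type*} (P1 P2 : Set α) (Q1 Q2 F1 F2 F3 : Set (Set α))
    (hF1 : ∀ X ∈ F1, X ⊆ P1) (hF2 : ∀ X ∈ F2, X ⊆ P2)
    (hQ1 : ∀ A ∈ Q1, A ⊆ P1) (hQ2 : ∀ A ∈ Q2, A ⊆ P2)
    (h3a : ∀ B ∈ F3, B ∩ P1 ∈ downClosure F1)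
    (h3b : ∀ B ∈ F3, B ∩ P2 ∈ downClosure F2)
    (hq1 : Q3cond P1 F1) (hq2 : Q3cond P2 F2)
    (hcons1 : Consistency Q1 F1) (havail1 : Availability Q1 F1)
    (hcons2 : Consistency Q2 F2) (havail2 : Availability Q2 F2) :
    Consistency {S | ∃ A ∈ Q1, ∃ B ∈ Q2, S = A ∪ B} F3 := by
  rintro S ⟨A1, hA1, B1, hB1, rfl⟩ T ⟨A2, hA2, B2, hB2, rfl⟩ X hX hsub
  obtain ⟨Y, hY, hYsub⟩ := h3a X hX
  exact hcons1 A1 hA1 A2 hA2 Y hY fun x hx =>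
    hYsub ⟨hsub ⟨Or.inl hx.1, Or.inl hx.2⟩, hQ1 A1 hA1 hx.1⟩
end

section
/- Let Q be an asymmetric Byzantine quorum system for an asymmetric fail-prone system F = [F_1,...,F_n]. In any execution with actual faulty set F for which a guild exists, and for any correct process p_i, every quorum Q_i ∈ Q_i of p_i contains at least one process from the guild. -/
/-- Consistency of an asymmetric BQS `QQ` for asymmetric fail-prone system `FF`. -/
def AConsistency {α : Type*} (QQ FF : α → Set (Set α)) : Prop :=
  ∀ i j, ∀ Qi ∈ QQ i, ∀ Qj ∈ QQ j,
    ∀ Z ∈ downClosure (FF i) ∩ downClosure (FF j), ¬ Qi ∩ Qj ⊆ Z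

/-- Availability of an asymmetric BQS `QQ` for `FF`. -/
def AAvailability {α : Type*} (QQ FF : α → Set (Set α)) : Prop :=
  ∀ i, ∀ X ∈ FF i, ∃ Q ∈ QQ i, X ∩ Q = ∅

/-- `G` is a guild for faulty set `B`: every member is wise and has a quorum inside `G`. -/
def IsGuild {α : Type*} (QQ FF : α → Set (Set α)) (B G : Set α) : Prop :=
  (∀ i ∈ G, B ∈ downClosure (FF i)) ∧ (∀ i ∈ G, ∃ Q ∈ QQ i, Q ⊆ G)

/-- in an execution of an asymmetric BQS with faulty set `B` admitting a
(nonempty) guild `G`, every quorum of any correct process intersects the guild. -/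
theorem stmt8 {α : Type*} (QQ FF : α → Set (Set α))
    (hne : ∀ i, (FF i).Nonempty)
    (hcons : AConsistency QQ FF) (havail : AAvailability QQ FF)
    (B G : Set α) (hG : IsGuild QQ FF B G) (hGne : G.Nonempty)
    (i : α) (hi : i ∉ B) :
    ∀ Qi ∈ QQ i, (Qi ∩ G).Nonempty := by
  intro Qi hQi
  obtain ⟨j, hj⟩ := hGne
  obtain ⟨Qj, hQj, hQjG⟩ := hG.2 j hj
  have hZi : (∅ : Set α) ∈ downClosure (FF i) := by
    obtain ⟨X, hX⟩ := hne i; exact ⟨X, hX, Set.empty_subset X⟩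
  have hZj : (∅ : Set α) ∈ downClosure (FF j) := by
    obtain ⟨X, hX⟩ := hne j; exact ⟨X, hX, Set.empty_subset X⟩
  have h := hcons i j Qi hQi Qj hQj ∅ ⟨hZi, hZj⟩
  rw [Set.not_subset] at h
  obtain ⟨x, hx, -⟩ := h
  exact ⟨x, hx.1, hQjG hx.2⟩
end

section
/- An asymmetric fail-prone system F = [F_1,...,F_n] satisfies the B3-condition if and only if there exists an asymmetric Byzantine quorum system for F. -/
/-- The B3-condition for an asymmetric fail-prone system (processes = all of `α`). -/
def B3cond {α : Type*} (FF : α → Set (Set α)) : Prop :=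
  ∀ i j, ∀ X ∈ FF i, ∀ Y ∈ FF j,
    ∀ Z ∈ downClosure (FF i) ∩ downClosure (FF j),
      ¬ (Set.univ : Set α) ⊆ X ∪ Y ∪ Z

/-- an asymmetric fail-prone system satisfies the B3-condition iff
an asymmetric Byzantine quorum system for it exists. -/
theorem stmt12 {α : Type*} (FF : α → Set (Set α)) :
    B3cond FF ↔ ∃ QQ : α → Set (Set α), AConsistency QQ FF ∧ AAvailability QQ FF := by
  constructor
  · intro hB3
    refine ⟨fun i => {Q | ∃ X ∈ FF i, Q = Xᶜ}, ?_, ?_⟩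
    · rintro i j Qi ⟨X, hX, rfl⟩ Qj ⟨Y, hY, rfl⟩ Z hZ hsub
      apply hB3 i j X hX Y hY Z hZ
      intro p _
      by_cases hpX : p ∈ X
      · exact Or.inl (Or.inl hpX)
      by_cases hpY : p ∈ Y
      · exact Or.inl (Or.inr hpY)
      · exact Or.inr (hsub ⟨hpX, hpY⟩)
    · intro i X hX
      exact ⟨Xᶜ, ⟨X, hX, rfl⟩, Set.inter_compl_self X⟩
  · rintro ⟨QQ, hCons, hAvail⟩ i j X hX Y hY Z hZ huniv
    obtain ⟨Qi, hQi, hXQi⟩ := hAvail i X hX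
    obtain ⟨Qj, hQj, hYQj⟩ := hAvail j Y hY
    apply hCons i j Qi hQi Qj hQj Z hZ
    rintro p ⟨hpi, hpj⟩
    rcases huniv (Set.mem_univ p) with (hpX | hpY) | hpZ
    · exact absurd (Set.eq_empty_iff_forall_notMem.mp hXQi p) (by simp [hpX, hpi])
    · exact absurd (Set.eq_empty_iff_forall_notMem.mp hYQj p) (by simp [hpY, hpj])
    · exact hpZ
end

section
/- A fail-prone system F over P satisfies the Q3-condition if and only if a Byzantine quorum system for F exists; moreover if Q3(F) holds then the bijective complement {P \ F : F ∈ F} is a Byzantine quorum system for F. -/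
lemma bqs_of_q3 {α : Type*} (P : Set α) (F : Set (Set α)) (h : Q3cond P F) :
    Consistency {Q | ∃ X ∈ F, Q = P \ X} F ∧
    Availability {Q | ∃ X ∈ F, Q = P \ X} F := by
  constructor
  · rintro A ⟨X, hX, rfl⟩ B ⟨Y, hY, rfl⟩ Z hZ hsub
    apply h X hX Y hY Z hZ
    intro p hp
    by_cases hpX : p ∈ X
    · exact Or.inl (Or.inl hpX)
    by_cases hpY : p ∈ Y
    · exact Or.inl (Or.inr hpY)
    · exact Or.inr (hsub ⟨⟨hp, hpX⟩, ⟨hp, hpY⟩⟩)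
  · intro X hX
    exact ⟨P \ X, ⟨X, hX, rfl⟩, by ext p; simp⟩

/-- `Q3(F)` holds iff a BQS for `F` over `P` exists; moreover, if
`Q3(F)` holds then the bijective complement `{P \ F : F ∈ F}` is a BQS for `F`. -/
theorem stmt13 {α : Type*} (P : Set α) (F : Set (Set α)) :
    (Q3cond P F ↔
      ∃ Q : Set (Set α), (∀ A ∈ Q, A ⊆ P) ∧ Consistency Q F ∧ Availability Q F) ∧
    (Q3cond P F →
      Consistency {Q | ∃ X ∈ F, Q = P \ X} F ∧
      Availability {Q | ∃ X ∈ F, Q = P \ X} F) := by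
  refine ⟨⟨fun h => ⟨{Q | ∃ X ∈ F, Q = P \ X}, ?_, bqs_of_q3 P F h⟩, ?_⟩, bqs_of_q3 P F⟩
  · rintro A ⟨X, _, rfl⟩; exact Set.diff_subset
  · rintro ⟨Q, hQP, hcons, havail⟩ A hA B hB C hC hcov
    obtain ⟨QA, hQA, hQAdisj⟩ := havail A hA
    obtain ⟨QB, hQB, hQBdisj⟩ := havail B hB
    apply hcons QA hQA QB hQB C hC
    intro p ⟨hpA, hpB⟩
    rcases hcov (hQP QA hQA hpA) with (h | h) | h
    · exact absurd (Set.eq_empty_iff_forall_notMem.mp hQAdisj p ⟨h, hpA⟩) not_false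
    · exact absurd (Set.eq_empty_iff_forall_notMem.mp hQBdisj p ⟨h, hpB⟩) not_false
    · exact h
end
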